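/- Let S be a closed symmetric operator with non-dense domain in a complex Hilbert space H, set H₀ := closure(dom S), and assume S is regular, i.e. the operator S₀ := P_{H₀}S with domain dom S has closed graph. Let z be a nonreal complex number and N_z := (ran(S − z̄I))^⊥. Then the set G := {(f + φ, P_{H₀}(Sf + zφ)) : f ∈ dom S, φ ∈ N_z} is a closed subset of H × H. (That is, the compression P_{H₀}S̃_z of the Shtraus extension S̃_z of S, with domain dom S + N_z, is a closed operator.) -/

import Mathlib

set_option synthInstance.maxHeartbeats 1000000

open scoped ComplexInnerProductSpace

variable {H : Type*} [NormedAddCommGroup H] [InnerProductSpace ℂ H] [CompleteSpace H]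

/-- The operator `P_K T` with domain `dom T`, mapping `H` into the closed subspace `K`. -/
noncomputable def projComp (K : Submodule ℂ H) [CompleteSpace K] (T : H →ₗ.[ℂ] H) :
    H →ₗ.[ℂ] (↥K) where
  domain := T.domain
  toFun := K.orthogonalProjection.toLinearMap ∘ₗ T.toFun

/-- The deficiency subspace `N_λ = (ran (S - λ̄ I))ᗮ` of an operator `S`. -/
noncomputable abbrev defSubspace (S : H →ₗ.[ℂ] H) (lam : ℂ) : Submodule ℂ H :=
  (LinearMap.range (S.toFun - (starRingEnd ℂ lam) • S.domain.subtype))ᗮ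

/-!
The set is the range of the bounded linear map `((f, S₀f), φ) ↦ (f + φ, S₀f + z P₀φ)` on the
Banach space `graph S₀ × N_z`, so it suffices that this map is bounded below. Write
`u = f + φ` and `w = S₀f + z P₀φ`. Since `f ∈ H₀` we have `S₀f - zf = w - z P₀u`, and
`⟪S₀f, f⟫ = ⟪Sf, f⟫` is real, so `|Im z| ‖f‖ ≤ ‖S₀f - zf‖ ≤ ‖w‖ + |z| ‖u‖`. Then
`φ = u - f` and `S₀f = w - z P₀φ` are bounded by `‖(u, w)‖` as well.
-/

open Submodule

section ShtrausMap

variable {E : Type*} [NormedAddCommGroup E] [InnerProductSpace ℂ E]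

theorem abs_im_mul_norm_le_norm_sub_smul (z : ℂ) {s f : E} (hreal : (⟪s, f⟫).im = 0) :
    |z.im| * ‖f‖ ≤ ‖s - z • f‖ := by
  have him : (⟪s - z • f, f⟫).im = z.im * ‖f‖ ^ 2 := by
    rw [inner_sub_left, inner_smul_left, inner_self_eq_norm_sq_to_K]
    simp [Complex.mul_im, hreal, ← Complex.ofReal_pow]
  have hbound : |z.im| * ‖f‖ * ‖f‖ ≤ ‖s - z • f‖ * ‖f‖ := by
    calc |z.im| * ‖f‖ * ‖f‖ = |(⟪s - z • f, f⟫).im| := by rw [him, abs_mul, abs_sq]; ring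
      _ ≤ ‖⟪s - z • f, f⟫‖ := Complex.abs_im_le_norm _
      _ ≤ ‖s - z • f‖ * ‖f‖ := norm_inner_le_norm _ _
  rcases (norm_nonneg f).eq_or_lt with hf | hf
  · simp [← hf]
  · exact le_of_mul_le_mul_right hbound hf

variable (K : Submodule ℂ E) [K.HasOrthogonalProjection]

theorem abs_im_mul_norm_le_of_mem (z : ℂ) {s f : E} (hf : f ∈ K) (hreal : (⟪s, f⟫).im = 0)
    (φ : E) : |z.im| * ‖f‖ ≤ ‖s + z • K.starProjection φ‖ + ‖z‖ * ‖f + φ‖ :=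
  calc |z.im| * ‖f‖ ≤ ‖s - z • f‖ := abs_im_mul_norm_le_norm_sub_smul z hreal
    _ = ‖(s + z • K.starProjection φ) - z • K.starProjection (f + φ)‖ := by
        rw [map_add, K.starProjection_eq_self_iff.mpr hf]
        congr 1
        module
    _ ≤ ‖s + z • K.starProjection φ‖ + ‖z‖ * ‖f + φ‖ := by
        grw [norm_sub_le, norm_smul, K.norm_starProjection_apply_le]

variable {K} (T : E →ₗ.[ℂ] K) (N : Submodule ℂ E) (z : ℂ)

noncomputable def shtrausMap : T.graph × N →L[ℂ] E × E where
  toFun x := ((x.1 : E × K).1 + x.2, ((x.1 : E × K).2 : E) + z • K.starProjection x.2)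
  map_add' x y := by
    simp only [Prod.fst_add, Prod.snd_add, coe_add, map_add, Prod.mk_add_mk]
    congr 1 <;> module
  map_smul' c x := by
    simp only [Prod.smul_fst, Prod.smul_snd, coe_smul, map_smul, RingHom.id_apply,
      Prod.smul_mk]
    congr 1 <;> module
  cont := by fun_prop

@[simp]
theorem shtrausMap_apply (x : T.graph × N) :
    shtrausMap T N z x =
      ((x.1 : E × K).1 + x.2, ((x.1 : E × K).2 : E) + z • K.starProjection x.2) :=
  rfl

theorem norm_le_mul_norm_shtrausMap (hdom : T.domain ≤ K)
    (hreal : ∀ f : T.domain, (⟪(T f : E), (f : E)⟫).im = 0) (hz : z.im ≠ 0) (x : T.graph × N) :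
    ‖x‖ ≤ (1 + ‖z‖) * (1 + (1 + ‖z‖) / |z.im|) * ‖shtrausMap T N z x‖ := by
  obtain ⟨⟨⟨f, s⟩, hg⟩, φ⟩ := x
  obtain ⟨y, rfl, rfl⟩ := T.mem_graph_iff.mp hg
  set Φx := shtrausMap T N z (⟨((y : E), T y), hg⟩, φ)
  set U := ‖Φx‖
  set a := (1 + ‖z‖) / |z.im|
  have hU : ‖(y : E) + φ‖ ≤ U ∧ ‖(T y : E) + z • K.starProjection φ‖ ≤ U :=
    ⟨norm_fst_le Φx, norm_snd_le Φx⟩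
  have hy : ‖(y : E)‖ ≤ a * U := by
    rw [div_mul_eq_mul_div, le_div_iff₀' (abs_pos.mpr hz)]
    calc |z.im| * ‖(y : E)‖ ≤ ‖(T y : E) + z • K.starProjection φ‖ + ‖z‖ * ‖(y : E) + φ‖ :=
          abs_im_mul_norm_le_of_mem K z (hdom y.2) (hreal y) φ
      _ ≤ U + ‖z‖ * U := by grw [hU.1, hU.2]
      _ = (1 + ‖z‖) * U := by ring
  have hφ : ‖(φ : E)‖ ≤ (1 + a) * U :=
    calc ‖(φ : E)‖ = ‖((y : E) + φ) - y‖ := by rw [add_sub_cancel_left]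
      _ ≤ U + a * U := by grw [norm_sub_le, hU.1, hy]
      _ = (1 + a) * U := by ring
  have hTy : ‖(T y : E)‖ ≤ (1 + ‖z‖ * (1 + a)) * U :=
    calc ‖(T y : E)‖ = ‖((T y : E) + z • K.starProjection φ) - z • K.starProjection φ‖ := by
          rw [add_sub_cancel_right]
      _ ≤ U + ‖z‖ * ((1 + a) * U) := by
          grw [norm_sub_le, hU.2, norm_smul, K.norm_starProjection_apply_le, hφ]
      _ = (1 + ‖z‖ * (1 + a)) * U := by ring
  have hzaU : 0 ≤ ‖z‖ * (1 + a) * U := by positivity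
  have hU0 : 0 ≤ U := norm_nonneg _
  have haU : 0 ≤ a * U := by positivity
  simp only [Prod.norm_def, coe_norm, max_le_iff]
  refine ⟨⟨?_, ?_⟩, ?_⟩ <;> linarith

theorem isClosed_range_shtrausMap [CompleteSpace E] [CompleteSpace K] [CompleteSpace N]
    (hT : T.IsClosed) (hdom : T.domain ≤ K)
    (hreal : ∀ f : T.domain, (⟪(T f : E), (f : E)⟫).im = 0) (hz : z.im ≠ 0) :
    IsClosed (Set.range (shtrausMap T N z)) := by
  have : CompleteSpace T.graph := hT.completeSpace_coe
  set C := (1 + ‖z‖) * (1 + (1 + ‖z‖) / |z.im|)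
  have hC : 0 ≤ C := by positivity
  have hanti : AntilipschitzWith C.toNNReal (shtrausMap T N z) :=
    AddMonoidHomClass.antilipschitz_of_bound _ fun x => by
      simpa only [Real.coe_toNNReal _ hC] using norm_le_mul_norm_shtrausMap T N z hdom hreal hz x
  exact hanti.isClosed_range (shtrausMap T N z).uniformContinuous

theorem isClosed_setOf_shtraus [CompleteSpace E] [CompleteSpace K] [CompleteSpace N]
    (hT : T.IsClosed) (hdom : T.domain ≤ K)
    (hreal : ∀ f : T.domain, (⟪(T f : E), (f : E)⟫).im = 0) (hz : z.im ≠ 0) :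
    IsClosed {p : E × E | ∃ (f : T.domain) (φ : E), φ ∈ N ∧
      p.1 = f + φ ∧ p.2 = (T f : E) + z • K.starProjection φ} := by
  convert isClosed_range_shtrausMap T N z hT hdom hreal hz using 1
  ext ⟨u, w⟩
  constructor
  · rintro ⟨f, φ, hφ, rfl, rfl⟩
    exact ⟨(⟨((f : E), T f), T.mem_graph f⟩, ⟨φ, hφ⟩), rfl⟩
  · rintro ⟨⟨⟨⟨f, s⟩, hg⟩, φ⟩, hx⟩
    obtain ⟨y, rfl, rfl⟩ := T.mem_graph_iff.mp hg
    simp only [shtrausMap_apply, Prod.mk.injEq] at hx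
    exact ⟨y, φ, φ.2, hx.1.symm, hx.2.symm⟩

end ShtrausMap

theorem isClosed_graph_compression_shtraus_extension_general
    (S : H →ₗ.[ℂ] H)
    (hsym : ∀ x y : S.domain, ⟪S x, (y : H)⟫ = ⟪(x : H), S y⟫)
    (hreg : (projComp S.domain.topologicalClosure S).IsClosed)
    (z : ℂ) (hz : z.im ≠ 0) :
    IsClosed {p : H × H | ∃ (f : S.domain) (φ : H), φ ∈ defSubspace S z ∧
      p.1 = (f : H) + φ ∧
      p.2 = (S.domain.topologicalClosure.orthogonalProjection (S f + z • φ) : H)} := by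
  set K := S.domain.topologicalClosure
  have hdom : S.domain ≤ K := S.domain.le_topologicalClosure
  have hreal (f : S.domain) : (⟪(projComp K S f : H), (f : H)⟫).im = 0 := by
    change (⟪K.starProjection (S f), f⟫).im = 0
    rw [K.inner_starProjection_left_eq_right, K.starProjection_eq_self_iff.mpr (hdom f.2)]
    exact Complex.conj_eq_iff_im.mp (by rw [inner_conj_symm, hsym])
  convert isClosed_setOf_shtraus (projComp K S) (defSubspace S z) z hreg hdom hreal hz using 1
  ext p
  refine exists_congr fun f => exists_congr fun φ => ?_
  rw [map_add, map_smul, coe_add, coe_smul]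
  rfl

/-- Let `S` be a regular closed symmetric operator with non-dense domain
(`S₀ = P_{H₀}S` with domain `dom S` has closed graph, `H₀ = closure (dom S)`) and let `z` be
nonreal.  Then the graph `{(f + φ, P_{H₀}(S f + z φ)) : f ∈ dom S, φ ∈ N_z}` of the compression
of the Shtraus extension `S̃_z` is closed in `H × H`. -/
theorem isClosed_graph_compression_shtraus_extension
    (S : H →ₗ.[ℂ] H)
    (hsym : ∀ x y : S.domain, ⟪S x, (y : H)⟫ = ⟪(x : H), S y⟫)
    (hclosed : S.IsClosed)
    (hnd : ¬ Dense (S.domain : Set H))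
    (hreg : (projComp S.domain.topologicalClosure S).IsClosed)
    (z : ℂ) (hz : z.im ≠ 0) :
    IsClosed {p : H × H | ∃ (f : S.domain) (φ : H), φ ∈ defSubspace S z ∧
      p.1 = (f : H) + φ ∧
      p.2 = (S.domain.topologicalClosure.orthogonalProjection (S f + z • φ) : H)} :=
  isClosed_graph_compression_shtraus_extension_general S hsym hreg z hz
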